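/- Let ξ_n be the reflected Gray code bijection and let N_j = {1,...,j}. Then for n ≥ 2, the sum over all initial segments satisfies Σ_{j=1}^{2^n − 1} θ(n, ξ_n^{-1}(N_j)) = 2^{2n−1} − 2^{n−1}. -/

import Mathlib

/-! An edge `uv` of `Q_n` with `ξ(u) < ξ(v)` is cut by exactly `ξ(v) - ξ(u)` of the initial segments
`ξ⁻¹(N_j)`, so the sum of the cuts is half of `D_n = ∑ |ξ(u) - ξ(v)|` over ordered pairs of adjacent
vertices. Splitting `Q_{n+1}` by its first coordinate, each half contributes `D_n` (the second half
is reflected, which preserves distances), and the perfect matching between them contributes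
`∑_u (2^{n+1} + 1 - 2 ξ_n(u)) = 4^n` in each direction; hence `D_n + 2^n = 4^n`. -/

open Finset

/-- Number of coordinates in which two 0-1 vectors differ. -/
def diffCount {n : ℕ} (u v : Fin n → Bool) : ℕ :=
  (Finset.univ.filter fun i => u i ≠ v i).card

/-- Adjacency in the hypercube `Q_n`: differ in exactly one coordinate. -/
def cubeAdj {n : ℕ} (u v : Fin n → Bool) : Prop := diffCount u v = 1

instance {n : ℕ} (u v : Fin n → Bool) : Decidable (cubeAdj u v) :=
  inferInstanceAs (Decidable (diffCount u v = 1))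

/-- `theta n S`: number of edges of `Q_n` with exactly one endpoint in `S`. -/
def theta (n : ℕ) (S : Finset (Fin n → Bool)) : ℕ :=
  ((Finset.univ ×ˢ Finset.univ).filter fun p : (Fin n → Bool) × (Fin n → Bool) =>
    p.1 ∈ S ∧ p.2 ∉ S ∧ cubeAdj p.1 p.2).card

/-- The reflected Gray code map `ξ_n : {0,1}^n → {1,...,2^n}`. -/
def gray : (n : ℕ) → (Fin n → Bool) → ℕ
  | 0, _ => 1
  | n + 1, v =>
    if v 0 = false then gray n (fun i => v i.succ)
    else 2 ^ (n + 1) + 1 - gray n (fun i => v i.succ)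

/-- Wirelength of an embedding `f` of `Q_n` into a host with distance `d`. -/
def wirelength {n : ℕ} {α : Type*} (d : α → α → ℕ) (f : (Fin n → Bool) → α) : ℕ :=
  (∑ u : Fin n → Bool, ∑ v : Fin n → Bool, if cubeAdj u v then d (f u) (f v) else 0) / 2

/-- Cyclic distance on the cycle with `m` vertices labeled `1,...,m`. -/
def cycDist (m a b : ℕ) : ℕ := min (Nat.dist a b) (m - Nat.dist a b)

/-- The 2-order Gray code map. -/
def gray2 (n₁ n₂ : ℕ) (v : Fin (n₁ + n₂) → Bool) : ℕ × ℕ :=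
  (gray n₁ fun i => v (Fin.castAdd n₂ i), gray n₂ fun i => v (Fin.natAdd n₁ i))

section Cut

variable {V : Type*} [Fintype V]

lemma card_filter_Icc_le_and_lt {a b M : ℕ} (ha : 1 ≤ a) (hb : b ≤ M + 1) :
    ((Icc 1 M).filter fun j => a ≤ j ∧ j < b).card = b - a := by
  rw [← Nat.card_Ico]
  congr 1
  ext j
  simp only [mem_filter, mem_Icc, mem_Ico]
  omega

lemma sum_card_cut_eq_sum_tsub [DecidableEq V] (r : V → V → Prop) [DecidableRel r]
    (f : V → ℕ) (M : ℕ) (hf : ∀ v, f v ∈ Icc 1 (M + 1)) :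
    ∑ j ∈ Icc 1 M, ((univ ×ˢ univ).filter fun p : V × V =>
        p.1 ∈ univ.filter (fun v => f v ∈ Icc 1 j) ∧
          p.2 ∉ univ.filter (fun v => f v ∈ Icc 1 j) ∧ r p.1 p.2).card =
      ∑ u, ∑ v, if r u v then f v - f u else 0 := by
  have hcut : ∀ j u v, (u ∈ univ.filter (fun v => f v ∈ Icc 1 j) ∧
      v ∉ univ.filter (fun v => f v ∈ Icc 1 j)) ↔ f u ≤ j ∧ j < f v := by
    intro j u v
    have hu := mem_Icc.1 (hf u)
    have hv := mem_Icc.1 (hf v)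
    simp only [mem_filter, mem_univ, true_and, mem_Icc]
    omega
  calc _ = ∑ j ∈ Icc 1 M, ∑ u, ∑ v, if (f u ≤ j ∧ j < f v) ∧ r u v then 1 else 0 := by
        refine sum_congr rfl fun j _ => ?_
        simp only [card_filter, sum_product, ← and_assoc, hcut]
    _ = ∑ u, ∑ v, ∑ j ∈ Icc 1 M, if (f u ≤ j ∧ j < f v) ∧ r u v then 1 else 0 := by
        rw [sum_comm]
        exact sum_congr rfl fun u _ => sum_comm
    _ = _ := by
        refine sum_congr rfl fun u _ => sum_congr rfl fun v _ => ?_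
        by_cases h : r u v
        · simp only [h, and_true, ← card_filter]
          exact card_filter_Icc_le_and_lt (mem_Icc.1 (hf u)).1 (mem_Icc.1 (hf v)).2
        · simp [h]

lemma sum_dist_eq_two_mul_sum_tsub (r : V → V → Prop) [DecidableRel r] [Std.Symm r]
    (f : V → ℕ) :
    ∑ u, ∑ v, (if r u v then Nat.dist (f u) (f v) else 0) =
      2 * ∑ u, ∑ v, if r u v then f v - f u else 0 := by
  have hswap : ∑ u, ∑ v, (if r u v then f v - f u else 0) =
      ∑ u, ∑ v, if r u v then f u - f v else 0 := by
    rw [sum_comm]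
    refine sum_congr rfl fun u _ => sum_congr rfl fun v _ => ?_
    simp only [Std.Symm.iff (r := r) v u]
  rw [two_mul]
  nth_rw 2 [hswap]
  simp only [← sum_add_distrib]
  refine sum_congr rfl fun u _ => sum_congr rfl fun v _ => ?_
  split_ifs
  · rw [Nat.dist, add_comm]
  · rfl

end Cut

section Cube

variable {n : ℕ}

lemma diffCount_comm (u v : Fin n → Bool) : diffCount u v = diffCount v u := by
  simp only [diffCount, ne_comm]

instance : Std.Symm (cubeAdj (n := n)) where
  symm u v h := by rwa [cubeAdj, diffCount_comm]

lemma diffCount_cons (a b : Bool) (u v : Fin n → Bool) :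
    diffCount (Fin.cons a u : Fin (n + 1) → Bool) (Fin.cons b v) =
      (if a ≠ b then 1 else 0) + diffCount u v := by
  simp [diffCount, card_filter, Fin.sum_univ_succ]

lemma cubeAdj_cons_cons_iff (a : Bool) (u v : Fin n → Bool) :
    cubeAdj (Fin.cons a u : Fin (n + 1) → Bool) (Fin.cons a v) ↔ cubeAdj u v := by
  simp [cubeAdj, diffCount_cons]

lemma diffCount_eq_zero_iff (u v : Fin n → Bool) : diffCount u v = 0 ↔ u = v := by
  simp [diffCount, filter_eq_empty_iff, funext_iff]

lemma cubeAdj_cons_cons_iff_of_ne {a b : Bool} (hab : a ≠ b) (u v : Fin n → Bool) :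
    cubeAdj (Fin.cons a u : Fin (n + 1) → Bool) (Fin.cons b v) ↔ u = v := by
  rw [cubeAdj, diffCount_cons, if_pos hab, add_eq_left, diffCount_eq_zero_iff]

lemma sum_const_cube {M : Type*} [AddCommMonoid M] (c : M) :
    ∑ _u : Fin n → Bool, c = 2 ^ n • c := by
  simp

lemma sum_cube_succ {M : Type*} [AddCommMonoid M] (f : (Fin (n + 1) → Bool) → M) :
    ∑ v, f v = ∑ a, ∑ u : Fin n → Bool, f (Fin.cons a u) := by
  rw [← (Fin.consEquiv fun _ => Bool).sum_comp, Fintype.sum_prod_type]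
  rfl

end Cube

section Gray

variable {n : ℕ}

@[simp] lemma gray_cons_false (u : Fin n → Bool) : gray (n + 1) (Fin.cons false u) = gray n u := by
  simp [gray]

@[simp] lemma gray_cons_true (u : Fin n → Bool) :
    gray (n + 1) (Fin.cons true u) = 2 ^ (n + 1) + 1 - gray n u := by
  simp [gray]

lemma gray_mem_Icc (v : Fin n → Bool) : gray n v ∈ Icc 1 (2 ^ n) := by
  induction n with
  | zero => simp [gray]
  | succ n ih =>
    obtain ⟨a, u, rfl⟩ : ∃ a u, v = Fin.cons a u := ⟨v 0, Fin.tail v, (Fin.cons_self_tail v).symm⟩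
    have h := mem_Icc.1 (ih u)
    cases a <;> simp only [gray_cons_false, gray_cons_true, mem_Icc, pow_succ] <;> omega

lemma gray_cons_false_add_gray_cons_true (u : Fin n → Bool) :
    gray (n + 1) (Fin.cons false u) + gray (n + 1) (Fin.cons true u) = 2 ^ (n + 1) + 1 := by
  have h := mem_Icc.1 (gray_mem_Icc u)
  simp only [gray_cons_false, gray_cons_true, pow_succ]
  omega

lemma dist_gray_cons_cons (a : Bool) (u v : Fin n → Bool) :
    Nat.dist (gray (n + 1) (Fin.cons a u)) (gray (n + 1) (Fin.cons a v)) =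
      Nat.dist (gray n u) (gray n v) := by
  have hu := mem_Icc.1 (gray_mem_Icc u)
  have hv := mem_Icc.1 (gray_mem_Icc v)
  cases a
  · rw [gray_cons_false, gray_cons_false]
  · simp only [gray_cons_true, Nat.dist, pow_succ]
    omega

lemma two_mul_sum_gray : 2 * ∑ v, gray n v = 2 ^ n * (2 ^ n + 1) := by
  cases n with
  | zero => simp [gray]
  | succ n =>
    rw [sum_cube_succ, Fintype.sum_bool, add_comm, ← sum_add_distrib]
    rw [sum_congr rfl fun u _ => gray_cons_false_add_gray_cons_true u, sum_const_cube, smul_eq_mul]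
    ring

lemma sum_dist_gray_cons_false_true :
    ∑ u : Fin n → Bool, Nat.dist (gray (n + 1) (Fin.cons false u)) (gray (n + 1) (Fin.cons true u))
      = 4 ^ n := by
  have hpoint : ∀ u : Fin n → Bool,
      Nat.dist (gray (n + 1) (Fin.cons false u)) (gray (n + 1) (Fin.cons true u)) + 2 * gray n u
        = 2 ^ (n + 1) + 1 := by
    intro u
    have h := mem_Icc.1 (gray_mem_Icc u)
    simp only [gray_cons_false, gray_cons_true, Nat.dist, pow_succ]
    omega
  have hsum : ∑ u : Fin n → Bool, (Nat.dist (gray (n + 1) (Fin.cons false u))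
      (gray (n + 1) (Fin.cons true u)) + 2 * gray n u) = ∑ _u : Fin n → Bool, (2 ^ (n + 1) + 1) :=
    sum_congr rfl fun u _ => hpoint u
  rw [sum_add_distrib, ← mul_sum, two_mul_sum_gray, sum_const_cube, smul_eq_mul, pow_succ] at hsum
  rw [show (4 : ℕ) ^ n = 2 ^ n * 2 ^ n by rw [← mul_pow]; rfl]
  linarith

end Gray

-- Twice the wirelength of `f` as an embedding of `Q_n` into a path.
def cubeDistSum {n : ℕ} (f : (Fin n → Bool) → ℕ) : ℕ :=
  ∑ u, ∑ v, if cubeAdj u v then Nat.dist (f u) (f v) else 0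

lemma cubeDistSum_gray_succ (n : ℕ) :
    cubeDistSum (gray (n + 1)) = 2 * cubeDistSum (gray n) + 2 * 4 ^ n := by
  have hsame : ∀ a : Bool, ∑ u : Fin n → Bool, ∑ v : Fin n → Bool,
      (if cubeAdj (Fin.cons a u : Fin (n + 1) → Bool) (Fin.cons a v) then
        Nat.dist (gray (n + 1) (Fin.cons a u)) (gray (n + 1) (Fin.cons a v)) else 0) =
      cubeDistSum (gray n) := by
    intro a
    refine sum_congr rfl fun u _ => sum_congr rfl fun v _ => ?_
    simp only [cubeAdj_cons_cons_iff, dist_gray_cons_cons]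
  have hcross : ∀ a b : Bool, a ≠ b → ∑ u : Fin n → Bool, ∑ v : Fin n → Bool,
      (if cubeAdj (Fin.cons a u : Fin (n + 1) → Bool) (Fin.cons b v) then
        Nat.dist (gray (n + 1) (Fin.cons a u)) (gray (n + 1) (Fin.cons b v)) else 0) =
      ∑ u : Fin n → Bool, Nat.dist (gray (n + 1) (Fin.cons a u)) (gray (n + 1) (Fin.cons b u)) := by
    intro a b hab
    simp only [cubeAdj_cons_cons_iff_of_ne hab, sum_ite_eq, mem_univ, if_true]
  rw [cubeDistSum, sum_cube_succ]
  simp only [sum_cube_succ (fun v => ite _ _ _), Fintype.sum_bool, sum_add_distrib]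
  rw [hsame, hsame, hcross true false (by decide), hcross false true (by decide)]
  simp only [Nat.dist_comm (gray (n + 1) (Fin.cons true _)), sum_dist_gray_cons_false_true]
  ring

lemma cubeDistSum_gray_add_two_pow (n : ℕ) : cubeDistSum (gray n) + 2 ^ n = 4 ^ n := by
  induction n with
  | zero => simp [cubeDistSum, cubeAdj, diffCount]
  | succ n ih =>
    rw [cubeDistSum_gray_succ, pow_succ, pow_succ]
    omega

theorem stmt4_general (n : ℕ) :
    ∑ j ∈ Finset.Icc 1 (2 ^ n - 1),
        theta n (Finset.univ.filter fun v => gray n v ∈ Finset.Icc 1 j) =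
      2 ^ (2 * n - 1) - 2 ^ (n - 1) := by
  have hgray : ∀ v, gray n v ∈ Icc 1 (2 ^ n - 1 + 1) := fun v =>
    Nat.sub_add_cancel Nat.one_le_two_pow ▸ gray_mem_Icc v
  have hD := cubeDistSum_gray_add_two_pow n
  rw [cubeDistSum, sum_dist_eq_two_mul_sum_tsub] at hD
  simp only [theta]
  rw [sum_card_cut_eq_sum_tsub cubeAdj (gray n) (2 ^ n - 1) hgray]
  cases n with
  | zero => norm_num at hD ⊢
  | succ n =>
    rw [pow_succ, pow_succ, show (4 : ℕ) ^ n = 2 ^ (2 * n) by rw [pow_mul]; rfl] at hD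
    rw [show 2 * (n + 1) - 1 = 2 * n + 1 by omega, Nat.add_sub_cancel, pow_succ]
    omega

theorem stmt4 (n : ℕ) (hn : 2 ≤ n) :
    ∑ j ∈ Finset.Icc 1 (2 ^ n - 1),
        theta n (Finset.univ.filter fun v => gray n v ∈ Finset.Icc 1 j) =
      2 ^ (2 * n - 1) - 2 ^ (n - 1) :=
  stmt4_general n
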